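/- Let n ≥ 1, G : ℝⁿ → (n×n real symmetric matrices) smooth, V : ℝⁿ → ℝ smooth, and let ξ : ℝⁿ → ℝⁿ be smooth with £_ξ G = τ·G and £_ξ V = −τ·V for some smooth τ : ℝⁿ → ℝ. Suppose q : I → ℝⁿ and N : I → (0,∞) are smooth on an interval I and satisfy the Euler–Lagrange equations: for all t ∈ I and all κ, d/dt[(1/N) Σ_α G_{κα}(q) q̇^α] = (1/(2N)) Σ_{μ,ν} ∂G_{μν}/∂q^κ (q) q̇^μ q̇^ν − N ∂V/∂q^κ (q), together with the constraint Σ_{μ,ν} G_{μν}(q) q̇^μ q̇^ν + 2N² V(q) = 0. Then the quantity Q(t) = (1/N(t)) Σ_{κ,α} ξ^α(q(t)) G_{κα}(q(t)) q̇^κ(t) is constant on I. -/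

import Mathlib

open scoped BigOperators

/-- Partial derivative `∂f/∂q^α` of a scalar function on `ℝⁿ`. -/
noncomputable def pd {n : ℕ} (f : (Fin n → ℝ) → ℝ) (α : Fin n) (q : Fin n → ℝ) : ℝ :=
  fderiv ℝ f q (Pi.single α 1)

/-- Lie derivative `(£_ξ G)_{μν}`. -/
noncomputable def lieG {n : ℕ} (ξ : (Fin n → ℝ) → Fin n → ℝ)
    (G : (Fin n → ℝ) → Fin n → Fin n → ℝ) (q : Fin n → ℝ) (μ ν : Fin n) : ℝ :=
  ∑ α : Fin n, (ξ q α * pd (fun p => G p μ ν) α q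
      + pd (fun p => ξ p α) μ q * G q α ν
      + pd (fun p => ξ p α) ν q * G q μ α)

/-- Lie derivative `£_ξ V`. -/
noncomputable def lieV {n : ℕ} (ξ : (Fin n → ℝ) → Fin n → ℝ)
    (V : (Fin n → ℝ) → ℝ) (q : Fin n → ℝ) : ℝ :=
  ∑ α : Fin n, ξ q α * pd V α q

/-! With `p_κ = ∂L/∂q̇^κ`, the charge is `Q = ξ^κ(q) p_κ`. By the Euler–Lagrange equations,
`dQ/dt = (£_ξ G)(q̇, q̇) / (2N) - N £_ξ V`, which the conformal Killing conditions turn into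
`τ (G(q̇, q̇) + 2 N² V) / (2N)`, and this vanishes by the constraint. -/

namespace Minisuperspace

open Finset

variable {n : ℕ}

/-- `∂L/∂q̇^κ` at `q = x`, `q̇ = u`. -/
noncomputable def momentum (G : (Fin n → ℝ) → Fin n → Fin n → ℝ) (N : ℝ) (x u : Fin n → ℝ)
    (κ : Fin n) : ℝ :=
  (1 / N) * ∑ α, G x κ α * u α

/-- `∂L/∂q^κ` at `q = x`, `q̇ = u`. -/
noncomputable def eulerLagrangeForce (G : (Fin n → ℝ) → Fin n → Fin n → ℝ)
    (V : (Fin n → ℝ) → ℝ) (N : ℝ) (x u : Fin n → ℝ) (κ : Fin n) : ℝ :=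
  (1 / (2 * N)) * (∑ μ, ∑ ν, pd (fun p => G p μ ν) κ x * u μ * u ν) - N * pd V κ x

lemma fderiv_apply_eq_sum_pd (f : (Fin n → ℝ) → ℝ) (x v : Fin n → ℝ) :
    fderiv ℝ f x v = ∑ μ, v μ * pd f μ x := by
  conv_lhs => rw [pi_eq_sum_univ' v, map_sum]
  simp only [map_smul, smul_eq_mul, pd]

lemma hasDerivAt_comp_eq_sum_pd {f : (Fin n → ℝ) → ℝ} {q : ℝ → Fin n → ℝ} {u : Fin n → ℝ}
    {t : ℝ} (hf : DifferentiableAt ℝ f (q t)) (hq : HasDerivAt q u t) :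
    HasDerivAt (fun s => f (q s)) (∑ μ, u μ * pd f μ (q t)) t := by
  have h := hf.hasFDerivAt.comp_hasDerivAt t hq
  rwa [fderiv_apply_eq_sum_pd] at h

lemma hasDerivAt_sum_comp_mul {ξ : (Fin n → ℝ) → Fin n → ℝ} {q : ℝ → Fin n → ℝ}
    {u : Fin n → ℝ} {p : Fin n → ℝ → ℝ} {p' : Fin n → ℝ} {t : ℝ}
    (hξ : DifferentiableAt ℝ ξ (q t)) (hq : HasDerivAt q u t)
    (hp : ∀ κ, HasDerivAt (p κ) (p' κ) t) :
    HasDerivAt (fun s => ∑ κ, ξ (q s) κ * p κ s)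
      (∑ κ, ((∑ μ, u μ * pd (fun x => ξ x κ) μ (q t)) * p κ t + ξ (q t) κ * p' κ)) t := by
  refine HasDerivAt.fun_sum fun κ _ =>
    (hasDerivAt_comp_eq_sum_pd (f := fun x => ξ x κ) ?_ hq).fun_mul (hp κ)
  exact (differentiableAt_apply κ _).comp _ hξ

lemma sum_mul_momentum {G : (Fin n → ℝ) → Fin n → Fin n → ℝ} {x : Fin n → ℝ}
    (hG : ∀ μ ν, G x μ ν = G x ν μ) (N : ℝ) (ξv u : Fin n → ℝ) :
    (1 / N) * ∑ κ, ∑ α, ξv α * G x κ α * u κ = ∑ κ, ξv κ * momentum G N x u κ := by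
  simp only [momentum, mul_sum]
  rw [sum_comm]
  refine sum_congr rfl fun κ _ => sum_congr rfl fun α _ => ?_
  rw [hG α κ]
  ring

lemma sum_lieG_mul_mul {ξ : (Fin n → ℝ) → Fin n → ℝ} {G : (Fin n → ℝ) → Fin n → Fin n → ℝ}
    {x : Fin n → ℝ} (hG : ∀ μ ν, G x μ ν = G x ν μ) (u : Fin n → ℝ) :
    ∑ μ, ∑ ν, lieG ξ G x μ ν * u μ * u ν =
      ∑ α, ξ x α * (∑ μ, ∑ ν, pd (fun p => G p μ ν) α x * u μ * u ν)
        + 2 * ∑ κ, (∑ μ, u μ * pd (fun p => ξ p κ) μ x) * ∑ α, G x κ α * u α := by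
  have hsymm : ∑ μ, ∑ ν, ∑ α, pd (fun p => ξ p α) ν x * G x μ α * u μ * u ν
      = ∑ μ, ∑ ν, ∑ α, pd (fun p => ξ p α) μ x * G x α ν * u μ * u ν := by
    rw [sum_comm]
    refine sum_congr rfl fun μ _ => sum_congr rfl fun ν _ => sum_congr rfl fun α _ => ?_
    rw [hG ν α]
    ring
  have hξG : ∑ μ, ∑ ν, ∑ α, ξ x α * pd (fun p => G p μ ν) α x * u μ * u ν
      = ∑ α, ξ x α * (∑ μ, ∑ ν, pd (fun p => G p μ ν) α x * u μ * u ν) := by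
    rw [sum_comm_cycle]
    simp only [mul_sum, mul_assoc]
  have hdξG : ∑ μ, ∑ ν, ∑ α, pd (fun p => ξ p α) μ x * G x α ν * u μ * u ν
      = ∑ κ, (∑ μ, u μ * pd (fun p => ξ p κ) μ x) * ∑ α, G x κ α * u α := by
    rw [sum_comm_cycle]
    simp only [sum_mul_sum]
    exact sum_congr rfl fun _ _ => sum_congr rfl fun _ _ => sum_congr rfl fun _ _ => by ring
  simp only [lieG, sum_mul, add_mul, sum_add_distrib, hsymm, hξG, hdξG]
  ring

lemma sum_mul_momentum_add_mul_eulerLagrangeForce_eq_zero {ξ : (Fin n → ℝ) → Fin n → ℝ}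
    {G : (Fin n → ℝ) → Fin n → Fin n → ℝ} {V τ : (Fin n → ℝ) → ℝ} {x : Fin n → ℝ}
    (hG : ∀ μ ν, G x μ ν = G x ν μ) (hlieG : ∀ μ ν, lieG ξ G x μ ν = τ x * G x μ ν)
    (hlieV : lieV ξ V x = -τ x * V x) (N : ℝ) (u : Fin n → ℝ)
    (hcon : (∑ μ, ∑ ν, G x μ ν * u μ * u ν) + 2 * N ^ 2 * V x = 0) :
    ∑ κ, ((∑ μ, u μ * pd (fun p => ξ p κ) μ x) * momentum G N x u κ
      + ξ x κ * eulerLagrangeForce G V N x u κ) = 0 := by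
  have hconf : ∑ α, ξ x α * (∑ μ, ∑ ν, pd (fun p => G p μ ν) α x * u μ * u ν)
        + 2 * ∑ κ, (∑ μ, u μ * pd (fun p => ξ p κ) μ x) * ∑ α, G x κ α * u α
      = τ x * ∑ μ, ∑ ν, G x μ ν * u μ * u ν := by
    rw [← sum_lieG_mul_mul hG]
    simp only [hlieG, mul_sum, mul_assoc]
  calc _ = ∑ κ, ((1 / (2 * N)) * (ξ x κ * (∑ μ, ∑ ν, pd (fun p => G p μ ν) κ x * u μ * u ν)
          + 2 * ((∑ μ, u μ * pd (fun p => ξ p κ) μ x) * ∑ α, G x κ α * u α))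
          - N * (ξ x κ * pd V κ x)) :=
        sum_congr rfl fun _ _ => by simp only [momentum, eulerLagrangeForce]; ring
    _ = (1 / (2 * N)) * (∑ α, ξ x α * (∑ μ, ∑ ν, pd (fun p => G p μ ν) α x * u μ * u ν)
        + 2 * ∑ κ, (∑ μ, u μ * pd (fun p => ξ p κ) μ x) * ∑ α, G x κ α * u α)
        - N * lieV ξ V x := by
        rw [sum_sub_distrib, ← mul_sum, ← mul_sum, sum_add_distrib, ← mul_sum, lieV]
    _ = 0 := by
      rw [hconf, hlieV, show ∑ μ, ∑ ν, G x μ ν * u μ * u ν = -(2 * N ^ 2 * V x) by linarith]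
      rcases eq_or_ne N 0 with rfl | hN
      · simp -- every term carries a factor `N` or `1 / N = 0`
      · field_simp
        ring

lemma _root_.Set.OrdConnected.eq_of_hasDerivAt_eq_zero {E : Type*} [NormedAddCommGroup E]
    [NormedSpace ℝ E] {s : Set ℝ} (hs : s.OrdConnected) {f : ℝ → E}
    (hf : ∀ t ∈ s, HasDerivAt f 0 t) {a b : ℝ} (ha : a ∈ s) (hb : b ∈ s) : f a = f b := by
  have h := hs.convex.norm_image_sub_le_of_norm_hasDerivWithin_le
    (fun t ht => (hf t ht).hasDerivWithinAt) (fun _ _ => norm_zero.le) ha hb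
  rw [zero_mul, norm_le_zero_iff, sub_eq_zero] at h
  exact h.symm

end Minisuperspace

open Minisuperspace

theorem conserved_charge_of_conformal_killing (n : ℕ)
    (G : (Fin n → ℝ) → Fin n → Fin n → ℝ) (V : (Fin n → ℝ) → ℝ)
    (hGsymm : ∀ q μ ν, G q μ ν = G q ν μ)
    (ξ : (Fin n → ℝ) → Fin n → ℝ) (τ : (Fin n → ℝ) → ℝ)
    (hξsmooth : ContDiff ℝ (⊤ : ℕ∞) ξ)
    (hlieG : ∀ q μ ν, lieG ξ G q μ ν = τ q * G q μ ν)
    (hlieV : ∀ q, lieV ξ V q = -(τ q) * V q)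
    (I : Set ℝ) (hI : I.OrdConnected)
    (q : ℝ → Fin n → ℝ) (qd : ℝ → Fin n → ℝ) (N : ℝ → ℝ)
    (hq : ∀ t ∈ I, HasDerivAt q (qd t) t)
    -- the Euler–Lagrange equations for q^κ:
    -- d/dt[(1/N) Σ_α G_{κα}(q) q̇^α] = (1/(2N)) Σ_{μν} ∂G_{μν}/∂q^κ q̇^μ q̇^ν − N ∂V/∂q^κ
    (hEL : ∀ t ∈ I, ∀ κ : Fin n,
      HasDerivAt (fun s => (1 / N s) * ∑ α : Fin n, G (q s) κ α * qd s α)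
        ((1 / (2 * N t)) * (∑ μ : Fin n, ∑ ν : Fin n,
            pd (fun p => G p μ ν) κ (q t) * qd t μ * qd t ν)
          - N t * pd V κ (q t)) t)
    -- the constraint equation: Σ_{μν} G_{μν}(q) q̇^μ q̇^ν + 2N²V(q) = 0
    (hcon : ∀ t ∈ I, (∑ μ : Fin n, ∑ ν : Fin n, G (q t) μ ν * qd t μ * qd t ν)
        + 2 * (N t) ^ 2 * V (q t) = 0) :
    ∀ t ∈ I, ∀ t' ∈ I,
      (1 / N t) * (∑ κ : Fin n, ∑ α : Fin n, ξ (q t) α * G (q t) κ α * qd t κ)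
        = (1 / N t') * (∑ κ : Fin n, ∑ α : Fin n, ξ (q t') α * G (q t') κ α * qd t' κ) := by
  intro t ht t' ht'
  rw [sum_mul_momentum (hGsymm (q t)), sum_mul_momentum (hGsymm (q t'))]
  have hcharge : ∀ s ∈ I, HasDerivAt
      (fun s => ∑ κ, ξ (q s) κ * momentum G (N s) (q s) (qd s) κ) 0 s := by
    intro s hs
    have h := hasDerivAt_sum_comp_mul
      (p := fun κ s => momentum G (N s) (q s) (qd s) κ)
      (p' := fun κ => eulerLagrangeForce G V (N s) (q s) (qd s) κ)
      (hξsmooth.differentiable (by simp) (q s)) (hq s hs) (hEL s hs)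
    rwa [sum_mul_momentum_add_mul_eulerLagrangeForce_eq_zero (hGsymm _)
      (hlieG _) (hlieV _) _ _ (hcon s hs)] at h
  exact hI.eq_of_hasDerivAt_eq_zero hcharge ht ht'
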